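/- arXiv:2512.22645 — 15 statements merged into one kernel-verified Lean document; each statement's English description precedes it below -/
import Mathlib

section
/- For integers a ≥ 2, d ≥ 2, and positive integers m, k with k dividing m and gcd(m/k, d) = 1, the number ∑_{j=0}^{d-1} (a^k)^j divides ∑_{j=0}^{d-1} (a^m)^j. -/
lemma aux_geom_dvd (x : ℤ) (d c : ℕ) (hdpos : 0 < d) (hg : Nat.gcd c d = 1) :
    (∑ j ∈ Finset.range d, x ^ j) ∣ (∑ j ∈ Finset.range d, x ^ (c * j)) := by
  set M : ℤ := ∑ j ∈ Finset.range d, x ^ j with hM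
  have hMd : M ∣ x ^ d - 1 := ⟨x - 1, by linear_combination (geom_sum_mul x d).symm⟩
  have hterm : ∀ j : ℕ, M ∣ x ^ (c * j) - x ^ (c * j % d) := by
    intro j
    have h1 : x ^ (c * j) - x ^ (c * j % d)
        = x ^ (c * j % d) * ((x ^ d) ^ (c * j / d) - 1 ^ (c * j / d)) := by
      rw [one_pow, mul_sub, mul_one, ← pow_mul, ← pow_add, Nat.mod_add_div]
    rw [h1]
    exact Dvd.dvd.mul_left (hMd.trans (sub_dvd_pow_sub_pow (x ^ d) 1 _)) _
  have hinj : ∀ i ∈ Finset.range d, ∀ j ∈ Finset.range d,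
      c * i % d = c * j % d → i = j := by
    intro i hi j hj hij
    rw [Finset.mem_range] at hi hj
    have h2 : c * i ≡ c * j [MOD d] := hij
    have h3 : i ≡ j [MOD d] :=
      h2.cancel_left_of_coprime (by rw [Nat.gcd_comm]; exact hg)
    exact h3.eq_of_lt_of_lt hi hj
  have himg : (Finset.range d).image (fun j => c * j % d) = Finset.range d := by
    apply Finset.eq_of_subset_of_card_le
    · intro y hy
      simp only [Finset.mem_image] at hy
      obtain ⟨j, hj, rfl⟩ := hy
      exact Finset.mem_range.mpr (Nat.mod_lt _ hdpos)
    · rw [Finset.card_image_of_injOn fun i hi j hj h => hinj i hi j hj h]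
  have hperm : ∑ j ∈ Finset.range d, x ^ (c * j % d) = M := by
    rw [hM]
    conv_rhs => rw [← himg]
    rw [Finset.sum_image hinj]
  have h3 : M ∣ ∑ j ∈ Finset.range d,
      (x ^ (c * j) - x ^ (c * j % d)) := Finset.dvd_sum fun j _ => hterm j
  rw [Finset.sum_sub_distrib, hperm] at h3
  have h4 := dvd_add h3 (dvd_refl M)
  simpa using h4

theorem stmt_0 (a d m k : ℕ) (ha : 2 ≤ a) (hd : 2 ≤ d) (hm : 0 < m) (hk : 0 < k)
    (hkm : k ∣ m) (hg : Nat.gcd (m / k) d = 1) :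
    (∑ j ∈ Finset.range d, (a ^ k) ^ j) ∣ (∑ j ∈ Finset.range d, (a ^ m) ^ j) := by
  have hmkc : m = k * (m / k) := (Nat.mul_div_cancel' hkm).symm
  rw [← Int.natCast_dvd_natCast]
  push_cast
  have key : ∀ j : ℕ, ((a : ℤ) ^ m) ^ j = ((a : ℤ) ^ k) ^ (m / k * j) := by
    intro j
    conv_lhs => rw [hmkc]
    rw [pow_mul, ← pow_mul]
  simp only [key]
  exact aux_geom_dvd ((a : ℤ) ^ k) d (m / k) (by omega) hg
end

section
/- For integers a ≥ 2, d ≥ 2, and positive integers m, k: if ∑_{j=0}^{d-1} (a^k)^j divides ∑_{j=0}^{d-1} (a^m)^j, then k divides m and gcd(m/k, d) = 1. -/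
open Finset

private lemma geom_nat (x n : ℕ) (hx : 1 ≤ x) :
    (∑ j ∈ range n, x ^ j) * (x - 1) = x ^ n - 1 := by
  have h1 : (1:ℕ) ≤ x ^ n := Nat.one_le_pow _ _ hx
  zify [hx, h1]
  exact geom_sum_mul (x : ℤ) n

private lemma geom_split (x n m : ℕ) :
    ∑ j ∈ range (n * m), x ^ j
      = (∑ i ∈ range n, (x ^ m) ^ i) * (∑ l ∈ range m, x ^ l) := by
  induction n with
  | zero => simp
  | succ n ih =>
    have h : (n + 1) * m = n * m + m := by ring
    rw [h, Finset.sum_range_add, ih, Finset.sum_range_succ, add_mul]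
    congr 1
    rw [Finset.mul_sum]
    apply Finset.sum_congr rfl
    intro l _
    rw [← pow_mul, ← pow_add, Nat.mul_comm n m]

private lemma sum_mod_period (F : ℕ → ℕ) (g n : ℕ) :
    ∑ j ∈ range (g * n), F (j % n) = g * ∑ i ∈ range n, F i := by
  induction g with
  | zero => simp
  | succ g ih =>
    have h : (g + 1) * n = g * n + n := by ring
    rw [h, Finset.sum_range_add, ih, add_mul, one_mul]
    congr 1
    apply Finset.sum_congr rfl
    intro j hj
    rw [add_comm, Nat.add_mul_mod_self_right, Nat.mod_eq_of_lt (mem_range.mp hj)]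

private lemma sum_coprime_perm (c t n : ℕ) (hn : 0 < n) (h : Nat.Coprime t n) :
    ∑ i ∈ range n, c ^ ((t * i) % n) = ∑ i ∈ range n, c ^ i := by
  have hinj : ∀ i ∈ range n, ∀ j ∈ range n,
      (t * i) % n = (t * j) % n → i = j := by
    intro i hi j hj hij
    have h2 : i ≡ j [MOD n] :=
      Nat.ModEq.cancel_left_of_coprime (by rwa [Nat.gcd_comm]) hij
    have h3 : i % n = j % n := h2
    rwa [Nat.mod_eq_of_lt (mem_range.mp hi), Nat.mod_eq_of_lt (mem_range.mp hj)] at h3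
  have himg : Finset.image (fun i => (t * i) % n) (range n) = range n := by
    apply Finset.eq_of_subset_of_card_le
    · intro x hx
      simp only [Finset.mem_image, mem_range] at hx ⊢
      obtain ⟨i, _, rfl⟩ := hx
      exact Nat.mod_lt _ hn
    · rw [Finset.card_image_of_injOn hinj]
  conv_rhs => rw [← himg]
  exact (Finset.sum_image hinj).symm

theorem stmt_1 (a d m k : ℕ) (ha : 2 ≤ a) (hd : 2 ≤ d) (hm : 0 < m) (hk : 0 < k)
    (hdvd : (∑ j ∈ Finset.range d, (a ^ k) ^ j) ∣ (∑ j ∈ Finset.range d, (a ^ m) ^ j)) :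
    k ∣ m ∧ Nat.gcd (m / k) d = 1 := by
  have ha1 : 1 ≤ a := by omega
  set N := ∑ j ∈ Finset.range d, (a ^ k) ^ j with hNdef
  -- Basic positivity facts
  have hNpos : 0 < N := Finset.sum_pos
    (fun j _ => Nat.pow_pos (Nat.pow_pos (by omega))) (by simp; omega)
  haveI : NeZero N := ⟨hNpos.ne'⟩
  -- N divides a^(k*d) - 1 and a^(m*d) - 1
  have hdvd1 : N ∣ a ^ (k * d) - 1 :=
    ⟨a ^ k - 1, by rw [pow_mul, ← geom_nat (a ^ k) d (Nat.one_le_pow _ _ ha1)]⟩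
  have hdvd2 : N ∣ a ^ (m * d) - 1 :=
    dvd_trans hdvd
      ⟨a ^ m - 1, by rw [pow_mul, ← geom_nat (a ^ m) d (Nat.one_le_pow _ _ ha1)]⟩
  -- translate to ZMod N
  have key : ∀ e : ℕ, N ∣ a ^ e - 1 ↔ (a : ZMod N) ^ e = 1 := by
    intro e
    have h1 : (1:ℕ) ≤ a ^ e := Nat.one_le_pow _ _ ha1
    rw [← Nat.modEq_iff_dvd' h1]
    constructor
    · intro h
      have := (ZMod.natCast_eq_natCast_iff 1 (a ^ e) N).mpr h
      push_cast at this
      exact this.symm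
    · intro h
      apply (ZMod.natCast_eq_natCast_iff 1 (a ^ e) N).mp
      push_cast
      exact h.symm
  have h1 : (a : ZMod N) ^ (k * d) = 1 := (key _).mp hdvd1
  have h2 : (a : ZMod N) ^ (m * d) = 1 := (key _).mp hdvd2
  set e := Nat.gcd k m with hedef
  have hepos : 0 < e := Nat.gcd_pos_of_pos_left _ hk
  have hord : orderOf (a : ZMod N) ∣ e * d := by
    rw [hedef, ← Nat.gcd_mul_right]
    exact Nat.dvd_gcd (orderOf_dvd_of_pow_eq_one h1) (orderOf_dvd_of_pow_eq_one h2)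
  have h3 : N ∣ a ^ (e * d) - 1 :=
    (key _).mpr (orderOf_dvd_iff_pow_eq_one.mp hord)
  -- size bound forces e = k
  have hNlb : a ^ (k * (d - 1)) + 1 ≤ N := by
    have hsplit : N = (∑ j ∈ Finset.range (d - 1), (a ^ k) ^ j) + (a ^ k) ^ (d - 1) := by
      rw [hNdef]
      conv_lhs => rw [show d = (d - 1) + 1 by omega]
      rw [Finset.sum_range_succ]
    have hone : 1 ≤ ∑ j ∈ Finset.range (d - 1), (a ^ k) ^ j :=
      Finset.sum_pos
        (fun j _ => Nat.pow_pos (Nat.pow_pos (by omega))) (by simp; omega)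
    rw [hsplit, ← pow_mul]
    omega
  have hNub : N ≤ a ^ (e * d) - 1 := Nat.le_of_dvd (by
    have : 2 ≤ a ^ (e * d) := le_trans ha (Nat.le_self_pow (by positivity) a)
    omega) h3
  have hlt : k * (d - 1) < e * d := by
    have : a ^ (k * (d - 1)) < a ^ (e * d) := by omega
    exact (Nat.pow_lt_pow_iff_right (by omega)).mp this
  have hek : e = k := by
    by_contra hne
    obtain ⟨c, hc⟩ := Nat.gcd_dvd_left k m
    have hc2 : 2 ≤ c := by
      rcases Nat.lt_or_ge c 2 with h | h
      · interval_cases c <;> omega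
      · exact h
    have hk2e : 2 * e ≤ k := by
      calc 2 * e = e * 2 := by ring
        _ ≤ e * c := Nat.mul_le_mul_left e hc2
        _ = k := hc.symm
    obtain ⟨d₁, rfl⟩ : ∃ d₁, d = d₁ + 1 := ⟨d - 1, by omega⟩
    simp only [Nat.add_sub_cancel] at hlt
    nlinarith [hlt, hk2e, hepos, hd]
  have hkm : k ∣ m := hek ▸ Nat.gcd_dvd_right k m
  refine ⟨hkm, ?_⟩
  -- Second part: gcd (m/k) d = 1
  set t := m / k with htdef
  have hmt : m = k * t := (Nat.mul_div_cancel' hkm).symm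
  have htpos : 0 < t := by
    rcases Nat.eq_zero_or_pos t with h | h
    · rw [h, mul_zero] at hmt; omega
    · exact h
  set b := a ^ k with hbdef
  have hb : 2 ≤ b := le_trans ha (Nat.le_self_pow (by omega) a)
  have hdvd' : N ∣ ∑ j ∈ Finset.range d, (b ^ t) ^ j := by
    have : a ^ m = b ^ t := by rw [hbdef, ← pow_mul, ← hmt]
    rwa [this] at hdvd
  by_contra hg
  set g := Nat.gcd t d with hgdef
  have hgpos : 0 < g := Nat.gcd_pos_of_pos_left _ htpos
  have hg2 : 2 ≤ g := by omega
  set d' := d / g with hd'def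
  set t' := t / g with ht'def
  have hgd : g ∣ d := Nat.gcd_dvd_right t d
  have hgt : g ∣ t := Nat.gcd_dvd_left t d
  have hdd' : d = g * d' := (Nat.mul_div_cancel' hgd).symm
  have htt' : t = g * t' := (Nat.mul_div_cancel' hgt).symm
  have hd'pos : 0 < d' := by
    rcases Nat.eq_zero_or_pos d' with h | h
    · rw [h, mul_zero] at hdd'; omega
    · exact h
  have hcop : Nat.Coprime t' d' := Nat.coprime_div_gcd_div_gcd hgpos
  -- b^d = 1 in ZMod N
  have hNb : N ∣ b ^ d - 1 := by
    refine ⟨b - 1, ?_⟩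
    rw [← geom_nat b d (by omega : 1 ≤ b), hNdef]
  have hbd1 : (b : ZMod N) ^ d = 1 := by
    have h1 : (1:ℕ) ≤ b ^ d := Nat.one_le_pow _ _ (by omega)
    have := (ZMod.natCast_eq_natCast_iff 1 (b ^ d) N).mpr
      ((Nat.modEq_iff_dvd' h1).mpr hNb)
    push_cast at this
    exact this.symm
  -- define S and show N ∣ S
  set S := ∑ j ∈ Finset.range d, b ^ ((t * j) % d) with hSdef
  have hcastS : ((S : ℕ) : ZMod N) = 0 := by
    have h0 : ((∑ j ∈ Finset.range d, (b ^ t) ^ j : ℕ) : ZMod N) = 0 :=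
      (ZMod.natCast_eq_zero_iff _ _).mpr hdvd'
    rw [hSdef]
    push_cast at h0 ⊢
    rw [← h0]
    apply Finset.sum_congr rfl
    intro j _
    conv_rhs => rw [← pow_mul, ← Nat.div_add_mod (t * j) d]
    rw [pow_add, pow_mul, hbd1, one_pow, one_mul]
  have hNS : N ∣ S := (ZMod.natCast_eq_zero_iff _ _).mp hcastS
  -- compute S = g * ∑_{i<d'} (b^g)^i
  have hSeq : S = g * ∑ i ∈ Finset.range d', (b ^ g) ^ i := by
    have step1 : S = ∑ j ∈ Finset.range (g * d'), (b ^ g) ^ ((t' * (j % d')) % d') := by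
      rw [hSdef, ← hdd']
      apply Finset.sum_congr rfl
      intro j _
      have hmod : (t * j) % d = g * ((t' * j) % d') := by
        rw [htt', hdd', mul_assoc, Nat.mul_mod_mul_left]
      rw [hmod, pow_mul]
      congr 1
      conv_rhs => rw [Nat.mul_mod, Nat.mod_mod_of_dvd j dvd_rfl, ← Nat.mul_mod]
    rw [step1, sum_mod_period (fun i => (b ^ g) ^ ((t' * i) % d')) g d']
    congr 1
    exact sum_coprime_perm (b ^ g) t' d' hd'pos hcop
  -- factorization of N
  have hNfac : N = (∑ i ∈ Finset.range d', (b ^ g) ^ i) * (∑ l ∈ Finset.range g, b ^ l) := by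
    rw [hNdef, hdd', mul_comm g d']
    exact geom_split b d' g
  set P := ∑ i ∈ Finset.range d', (b ^ g) ^ i with hPdef
  have hPpos : 0 < P := Finset.sum_pos (fun j _ => Nat.pow_pos (by positivity))
    (by simp; omega)
  have hglt : g < ∑ l ∈ Finset.range g, b ^ l := by
    have : ∑ l ∈ Finset.range g, 1 < ∑ l ∈ Finset.range g, b ^ l := by
      apply Finset.sum_lt_sum
      · intro i _; exact Nat.one_le_pow _ _ (by omega)
      · exact ⟨1, Finset.mem_range.mpr (by omega), by simpa using by omega⟩
    simpa using this
  have hSlt : S < N := by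
    rw [hSeq, hNfac, mul_comm P]
    exact mul_lt_mul_of_pos_right hglt hPpos
  have hSpos : 0 < S := by rw [hSeq]; exact Nat.mul_pos hgpos hPpos
  have := Nat.le_of_dvd hSpos hNS
  omega
end

section
/- For integers a ≥ 2, d ≥ 2, and positive integers m, k: ∑_{j=0}^{d-1} (a^k)^j divides ∑_{j=0}^{d-1} (a^m)^j if and only if k divides m and gcd(m/k, d) = 1. -/
open Finset

lemma sum_range_mul' {M : Type*} [AddCommMonoid M] (f : ℕ → M) (q n : ℕ) :
    ∑ j ∈ range (q * n), f j = ∑ p ∈ range q, ∑ i ∈ range n, f (p * n + i) := by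
  induction q with
  | zero => simp
  | succ q ih =>
      rw [Nat.succ_mul, Finset.sum_range_add, ih, Finset.sum_range_succ]

lemma pow_mod_eq {R : Type*} [Monoid R] (b : R) {d : ℕ} (hb : b ^ d = 1) (n : ℕ) :
    b ^ n = b ^ (n % d) := by
  conv_lhs => rw [← Nat.div_add_mod n d]
  rw [pow_add, pow_mul, hb, one_pow, one_mul]

lemma rot_sum {R : Type*} [CommRing R] (b : R) (t d : ℕ) (hd : 0 < d) (hb : b ^ d = 1) :
    ∑ j ∈ range d, (b ^ t) ^ j
      = (Nat.gcd t d : R) * ∑ i ∈ range (d / Nat.gcd t d), (b ^ Nat.gcd t d) ^ i := by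
  set g := Nat.gcd t d with hg
  have hgpos : 0 < g := Nat.gcd_pos_of_pos_right _ hd
  set t' := t / g with ht'
  set d' := d / g with hd'
  have hdd : d' * g = d := Nat.div_mul_cancel (Nat.gcd_dvd_right t d)
  have htt : t' * g = t := Nat.div_mul_cancel (Nat.gcd_dvd_left t d)
  have hco : Nat.Coprime t' d' := Nat.coprime_div_gcd_div_gcd hgpos
  have hd'pos : 0 < d' := Nat.div_pos (Nat.le_of_dvd hd (Nat.gcd_dvd_right t d)) hgpos
  have hstep : ∀ j : ℕ, (b ^ t) ^ j = (b ^ g) ^ ((t' * j) % d') := by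
    intro j
    rw [← pow_mul, pow_mod_eq b hb (t * j)]
    have : t * j % d = ((t' * j) % d') * g := by
      rw [← htt, ← hdd]
      calc t' * g * j % (d' * g) = t' * j * g % (d' * g) := by ring_nf
        _ = ((t' * j) % d') * g := Nat.mul_mod_mul_right _ _ _
    rw [this, mul_comm, pow_mul]
  calc ∑ j ∈ range d, (b ^ t) ^ j
      = ∑ j ∈ range (g * d'), (b ^ g) ^ ((t' * j) % d') := by
        rw [mul_comm g d', hdd]; exact Finset.sum_congr rfl fun j _ => hstep j
    _ = ∑ p ∈ range g, ∑ i ∈ range d', (b ^ g) ^ ((t' * (p * d' + i)) % d') :=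
        sum_range_mul' _ g d'
    _ = ∑ p ∈ range g, ∑ i ∈ range d', (b ^ g) ^ ((t' * i) % d') := by
        refine Finset.sum_congr rfl fun p _ => Finset.sum_congr rfl fun i _ => ?_
        congr 1
        have hh : t' * (p * d' + i) = d' * (t' * p) + t' * i := by ring
        rw [hh, Nat.mul_add_mod]
    _ = (g : R) * ∑ i ∈ range d', (b ^ g) ^ ((t' * i) % d') := by
        rw [Finset.sum_const, nsmul_eq_mul, Finset.card_range]
    _ = (g : R) * ∑ i ∈ range d', (b ^ g) ^ i := by
        congr 1
        have hinj : ∀ x ∈ range d', ∀ y ∈ range d',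
            (fun i => (t' * i) % d') x = (fun i => (t' * i) % d') y → x = y := by
          intro x hx y hy hxy
          simp only [Finset.mem_range] at hx hy
          have : x ≡ y [MOD d'] :=
            Nat.ModEq.cancel_left_of_coprime hco.symm hxy
          rwa [Nat.ModEq, Nat.mod_eq_of_lt hx, Nat.mod_eq_of_lt hy] at this
        have himg : Finset.image (fun i => (t' * i) % d') (range d') = range d' := by
          apply Finset.eq_of_subset_of_card_le
          · intro x hx
            simp only [Finset.mem_image, Finset.mem_range] at hx ⊢
            obtain ⟨i, _, rfl⟩ := hx
            exact Nat.mod_lt _ hd'pos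
          · rw [Finset.card_image_of_injOn (fun x hx y hy => hinj x hx y hy)]
        conv_rhs => rw [← himg, Finset.sum_image hinj]

theorem stmt_2 (a d m k : ℕ) (ha : 2 ≤ a) (hd : 2 ≤ d) (hm : 0 < m) (hk : 0 < k) :
    (∑ j ∈ Finset.range d, (a ^ k) ^ j) ∣ (∑ j ∈ Finset.range d, (a ^ m) ^ j) ↔
      k ∣ m ∧ Nat.gcd (m / k) d = 1 := by
  have ha1 : 1 < a := ha
  have hdpos : 0 < d := by omega
  set N := ∑ j ∈ Finset.range d, (a ^ k) ^ j with hN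
  have hNlb : a ^ (k * (d - 1)) + 1 ≤ N := by
    have h1 : N = (∑ j ∈ range (d - 1), (a ^ k) ^ j) + (a ^ k) ^ (d - 1) := by
      have := Finset.sum_range_succ (fun j => (a ^ k) ^ j) (d - 1)
      rw [show d - 1 + 1 = d from by omega] at this
      rw [hN, this]
    have h2 : 1 ≤ ∑ j ∈ range (d - 1), (a ^ k) ^ j := by
      calc 1 = (a ^ k) ^ 0 := by rw [pow_zero]
        _ ≤ _ := Finset.single_le_sum (f := fun j => (a ^ k) ^ j)
            (fun i _ => Nat.zero_le _) (Finset.mem_range.mpr (by omega))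
    have h3 : (a ^ k) ^ (d - 1) = a ^ (k * (d - 1)) := (pow_mul a k (d - 1)).symm
    omega
  have hNpos : 0 < N := by omega
  haveI : NeZero N := ⟨by omega⟩
  -- basic facts in ZMod N
  have hNcast : ((N : ℕ) : ZMod N) = 0 := ZMod.natCast_self N
  have hsumcast : (∑ j ∈ range d, ((a : ZMod N) ^ k) ^ j) = 0 := by
    rw [← hNcast, hN]
    push_cast
    rfl
  have hBd : ((a : ZMod N) ^ k) ^ d = 1 := by
    have := geom_sum_mul ((a : ZMod N) ^ k) d
    rw [hsumcast, zero_mul] at this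
    have h := this.symm
    rw [sub_eq_zero] at h
    exact h
  constructor
  · intro hdvd
    have hMcast : (((∑ j ∈ Finset.range d, (a ^ m) ^ j : ℕ)) : ZMod N) = 0 :=
      (ZMod.natCast_eq_zero_iff _ _).mpr hdvd
    have hsumM : (∑ j ∈ range d, ((a : ZMod N) ^ m) ^ j) = 0 := by
      rw [← hMcast]; push_cast; rfl
    -- a^(m*d) = 1 in ZMod N
    have hamd : (a : ZMod N) ^ (m * d) = 1 := by
      have := geom_sum_mul ((a : ZMod N) ^ m) d
      rw [hsumM, zero_mul] at this
      rw [pow_mul]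
      have h := this.symm
      rwa [sub_eq_zero] at h
    have hakd : (a : ZMod N) ^ (k * d) = 1 := by rw [pow_mul]; exact hBd
    have hgcd1 : (a : ZMod N) ^ (Nat.gcd (k * d) (m * d)) = 1 :=
      pow_gcd_eq_one.mpr ⟨hakd, hamd⟩
    rw [Nat.gcd_mul_right] at hgcd1
    set e := Nat.gcd k m with he
    have hepos : 0 < e := Nat.gcd_pos_of_pos_left _ hk
    -- N divides a^(e*d) - 1
    have hdvd2 : N ∣ a ^ (e * d) - 1 := by
      rw [← ZMod.natCast_eq_zero_iff]
      have h1 : (1 : ℕ) ≤ a ^ (e * d) := Nat.one_le_pow _ _ (by omega)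
      push_cast [h1]
      rw [hgcd1, sub_self]
    have hle : N ≤ a ^ (e * d) - 1 := by
      apply Nat.le_of_dvd _ hdvd2
      have : 2 ≤ a ^ (e * d) := le_trans ha (Nat.le_self_pow (by positivity) a)
      omega
    have hexp : k * (d - 1) < e * d := by
      by_contra hcon
      push_neg at hcon
      have : a ^ (e * d) ≤ a ^ (k * (d - 1)) := Nat.pow_le_pow_right (by omega) hcon
      omega
    have hek : e = k := by
      obtain ⟨c, hc⟩ := (Nat.gcd_dvd_left k m : e ∣ k)
      have hc0 : c ≠ 0 := by rintro rfl; rw [mul_zero] at hc; omega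
      by_contra hne
      have hc2 : 2 ≤ c := by
        rcases Nat.lt_or_ge c 2 with h | h
        · interval_cases c
          · exact absurd rfl hc0
          · rw [mul_one] at hc; exact absurd hc.symm hne
        · exact h
      have h1 : e * (2 * (d - 1)) ≤ e * (c * (d - 1)) :=
        Nat.mul_le_mul_left e (Nat.mul_le_mul_right _ hc2)
      have h2 : k * (d - 1) = e * (c * (d - 1)) := by rw [hc]; ring
      have h3 : e * (2 * (d - 1)) < e * d := by omega
      have h4 : 2 * (d - 1) < d := Nat.lt_of_mul_lt_mul_left h3
      omega
    have hkm : k ∣ m := hek ▸ Nat.gcd_dvd_right k m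
    refine ⟨hkm, ?_⟩
    ---- second part
    obtain ⟨t, rfl⟩ := hkm
    have htpos : 0 < t := by
      rcases Nat.eq_zero_or_pos t with h | h
      · subst h; simp at hm
      · exact h
    rw [Nat.mul_div_cancel_left t hk]
    by_contra hg1
    set g := Nat.gcd t d with hgdef
    have hgpos : 0 < g := Nat.gcd_pos_of_pos_right _ hdpos
    have hg2 : 2 ≤ g := by omega
    set d' := d / g with hd'def
    have hd'pos : 0 < d' := Nat.div_pos (Nat.le_of_dvd hdpos (Nat.gcd_dvd_right t d)) hgpos
    have hdd : d' * g = d := Nat.div_mul_cancel (Nat.gcd_dvd_right t d)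
    -- in ZMod N : cast of M equals g * W'
    have hrot := rot_sum ((a : ZMod N) ^ k) t d hdpos hBd
    have hMW : (((g * ∑ i ∈ range d', (a ^ (k * g)) ^ i : ℕ)) : ZMod N) = 0 := by
      rw [← hgdef, ← hd'def] at hrot
      push_cast
      simp only [pow_mul]
      rw [← hrot]
      simpa only [pow_mul] using hsumM
    have hNdvd : N ∣ g * ∑ i ∈ range d', (a ^ (k * g)) ^ i :=
      (ZMod.natCast_eq_zero_iff _ _).mp hMW
    -- factor N
    set W := ∑ i ∈ range d', (a ^ (k * g)) ^ i with hW
    set V := ∑ i ∈ range g, (a ^ k) ^ i with hV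
    have hfactor : N = V * W := by
      rw [hN, ← hdd, sum_range_mul' (fun j => (a ^ k) ^ j) d' g, hV, hW, Finset.mul_sum]
      refine Finset.sum_congr rfl fun p _ => ?_
      rw [Finset.sum_mul]
      refine Finset.sum_congr rfl fun i _ => ?_
      simp only [← pow_mul, ← pow_add]
      congr 1
      ring
    have hWpos : 0 < W := by
      rw [hW]
      apply Finset.sum_pos (fun i _ => by positivity)
      exact Finset.nonempty_range_iff.mpr (by omega)
    have hVdvd : V ∣ g := by
      have : V * W ∣ g * W := hfactor ▸ hNdvd
      exact (Nat.mul_dvd_mul_iff_right hWpos).mp this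
    have hVle : V ≤ g := Nat.le_of_dvd hgpos hVdvd
    have hVlb : g + 1 ≤ V := by
      have h1 : V = (∑ i ∈ range (g - 1), (a ^ k) ^ i) + (a ^ k) ^ (g - 1) := by
        have := Finset.sum_range_succ (fun j => (a ^ k) ^ j) (g - 1)
        rw [show g - 1 + 1 = g from by omega] at this
        rw [hV, this]
      have h2 : g - 1 ≤ ∑ i ∈ range (g - 1), (a ^ k) ^ i := by
        calc g - 1 = ∑ _i ∈ range (g - 1), 1 := by simp
          _ ≤ _ := Finset.sum_le_sum fun i _ => Nat.one_le_pow _ _ (by positivity)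
      have hak2 : 2 ≤ a ^ k := le_trans ha (Nat.le_self_pow (by omega) a)
      have h3 : 2 ≤ (a ^ k) ^ (g - 1) := le_trans hak2 (Nat.le_self_pow (by omega) _)
      omega
    omega
  · rintro ⟨⟨t, rfl⟩, hco⟩
    rw [Nat.mul_div_cancel_left t hk] at hco
    rw [← ZMod.natCast_eq_zero_iff]
    have hrot := rot_sum ((a : ZMod N) ^ k) t d hdpos hBd
    rw [hco] at hrot
    simp only [Nat.cast_one, one_mul, Nat.div_one, pow_one] at hrot
    push_cast
    calc ∑ j ∈ range d, ((a : ZMod N) ^ (k * t)) ^ j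
        = ∑ j ∈ range d, (((a : ZMod N) ^ k) ^ t) ^ j := by
          refine Finset.sum_congr rfl fun j _ => ?_
          rw [← pow_mul, ← pow_mul, ← pow_mul, mul_assoc]
      _ = ∑ i ∈ range d, ((a : ZMod N) ^ k) ^ i := hrot
      _ = 0 := hsumcast
end

section
/- For integers b ≥ 2 and positive integers n, d with d ≥ 2, letting l = gcd(n, d), n₁ = n/l, d₁ = d/l, we have M_d(b^n) ≡ l · M_{d₁}(b^l) (mod M_d(b)), where M_d(x) = ∑_{j=0}^{d-1} x^j. -/
lemma sum_pow_cycle {R : Type*} [CommRing R] (x : R) (a k : ℕ) (hx : x ^ a = 1) :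
    ∑ j ∈ Finset.range (a * k), x ^ j = (k : R) * ∑ j ∈ Finset.range a, x ^ j := by
  induction k with
  | zero => simp
  | succ k ih =>
    rw [Nat.mul_succ, Finset.sum_range_add, ih]
    simp only [pow_add, pow_mul, hx, one_pow, one_mul]
    push_cast
    ring

lemma inv_mod_cancel {d u v : ℕ} (hd : 1 < d) (huv : u * v % d = 1) {a : ℕ} (ha : a < d) :
    v * (u * a % d) % d = a := by
  have h1 : v * (u * a % d) ≡ a [MOD d] := by
    calc v * (u * a % d) ≡ v * (u * a) [MOD d] := (Nat.mod_modEq _ _).mul_left v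
      _ = (u * v) * a := by ring
      _ ≡ 1 * a [MOD d] := Nat.ModEq.mul_right a
          (by show (u * v) % d = 1 % d; rw [huv, Nat.mod_eq_of_lt hd])
      _ = a := one_mul a
  rw [Nat.ModEq] at h1
  rw [h1]
  exact Nat.mod_eq_of_lt ha

theorem stmt_4 (b n d : ℕ) (hb : 2 ≤ b) (hn : 0 < n) (hd : 2 ≤ d) :
    (∑ j ∈ Finset.range d, (b ^ n) ^ j) ≡
      Nat.gcd n d * ∑ j ∈ Finset.range (d / Nat.gcd n d), ((b ^ Nat.gcd n d) ^ j)
      [MOD ∑ j ∈ Finset.range d, b ^ j] := by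
  set m := ∑ j ∈ Finset.range d, b ^ j with hm
  set l := Nat.gcd n d with hl
  have hl0 : 0 < l := Nat.gcd_pos_of_pos_left _ hn
  set n₁ := n / l with hn1
  set d₁ := d / l with hd1
  have hld : l * d₁ = d := Nat.mul_div_cancel' (Nat.gcd_dvd_right n d)
  have hln : l * n₁ = n := Nat.mul_div_cancel' (Nat.gcd_dvd_left n d)
  have hd10 : 0 < d₁ := by
    rcases Nat.eq_zero_or_pos d₁ with h | h
    · rw [h, mul_zero] at hld; omega
    · exact h
  have hcop : Nat.Coprime n₁ d₁ := Nat.coprime_div_gcd_div_gcd hl0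
  rw [← ZMod.natCast_eq_natCast_iff]
  push_cast
  set B : ZMod m := (b : ZMod m) with hB
  have hm0 : (∑ j ∈ Finset.range d, B ^ j) = 0 := by
    have h : ((∑ j ∈ Finset.range d, b ^ j : ℕ) : ZMod m) = 0 := by
      rw [← hm]; exact ZMod.natCast_self m
    push_cast at h
    exact h
  have hBd : B ^ d = 1 := by
    have h := geom_sum_mul B d
    rw [hm0, zero_mul] at h
    exact sub_eq_zero.mp h.symm
  set Y : ZMod m := B ^ l with hY
  have hYd : Y ^ d₁ = 1 := by rw [hY, ← pow_mul, hld, hBd]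
  have hXY : B ^ n = Y ^ n₁ := by rw [hY, ← pow_mul, hln]
  have hXd : (B ^ n) ^ d₁ = 1 := by
    rw [hXY, ← pow_mul, mul_comm, pow_mul, hYd, one_pow]
  have step1 : ∑ j ∈ Finset.range d, (B ^ n) ^ j
      = (l : ZMod m) * ∑ j ∈ Finset.range d₁, (B ^ n) ^ j := by
    have h := sum_pow_cycle (B ^ n) d₁ l hXd
    rw [mul_comm d₁ l, hld] at h
    exact h
  have step2 : ∑ j ∈ Finset.range d₁, (B ^ n) ^ j = ∑ j ∈ Finset.range d₁, Y ^ j := by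
    have key : ∀ j, (B ^ n) ^ j = Y ^ (n₁ * j % d₁) := by
      intro j
      rw [hXY, ← pow_mul]
      conv_lhs => rw [← Nat.div_add_mod (n₁ * j) d₁]
      rw [pow_add, pow_mul, hYd, one_pow, one_mul]
    rw [Finset.sum_congr rfl (fun j _ => key j)]
    rcases eq_or_lt_of_le (Nat.one_le_iff_ne_zero.mpr hd10.ne') with h1 | h1
    · rw [← h1]; simp
    · obtain ⟨c, -, hc⟩ := Nat.exists_mul_mod_eq_one_of_coprime hcop h1
      refine Finset.sum_nbij' (fun j => n₁ * j % d₁) (fun j => c * j % d₁) ?_ ?_ ?_ ?_ ?_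
      · intro a ha; exact Finset.mem_range.mpr (Nat.mod_lt _ hd10)
      · intro a ha; exact Finset.mem_range.mpr (Nat.mod_lt _ hd10)
      · intro a ha
        exact inv_mod_cancel h1 hc (Finset.mem_range.mp ha)
      · intro a ha
        exact inv_mod_cancel h1 (by rwa [mul_comm] at hc) (Finset.mem_range.mp ha)
      · intro a ha; rfl
  rw [step1, step2]
end

section
/- In the polynomial ring ℤ[x], for positive integers n, d with d ≥ 2, letting l = gcd(n, d) and d₁ = d/l, the polynomial M_d(x^n) - l · M_{d₁}(x^l) is divisible by M_d(x), where M_d(x) = ∑_{j=0}^{d-1} x^j. -/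
open Polynomial Finset in
/-- M_d divides X^(d*q) - 1. -/
lemma aux_Md_dvd_pow_sub_one (d q : ℕ) :
    (∑ j ∈ Finset.range d, (X : ℤ[X]) ^ j) ∣ X ^ (d * q) - 1 := by
  have h1 : (∑ j ∈ Finset.range d, (X : ℤ[X]) ^ j) ∣ X ^ d - 1 :=
    ⟨X - 1, (geom_sum_mul X d).symm⟩
  have h2 : ((X : ℤ[X]) ^ d - 1) ∣ (X ^ d) ^ q - 1 ^ q := sub_dvd_pow_sub_pow _ _ _
  rw [pow_mul]
  exact h1.trans (by simpa using h2)

open Polynomial Finset in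
/-- M_d divides X^a - X^b when a ≡ b mod d. -/
lemma aux_Md_dvd_pow_sub_pow (d a b : ℕ) (h : a % d = b % d) :
    (∑ j ∈ Finset.range d, (X : ℤ[X]) ^ j) ∣ X ^ a - X ^ b := by
  have ha2 : (X : ℤ[X]) ^ a = X ^ (d * (a / d)) * X ^ (a % d) := by
    rw [← pow_add, Nat.div_add_mod]
  have hb2 : (X : ℤ[X]) ^ b = X ^ (d * (b / d)) * X ^ (b % d) := by
    rw [← pow_add, Nat.div_add_mod]
  rw [ha2, hb2, h]
  have hring : (X : ℤ[X]) ^ (d * (a / d)) * X ^ (b % d) - X ^ (d * (b / d)) * X ^ (b % d)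
      = ((X ^ (d * (a / d)) - 1) - (X ^ (d * (b / d)) - 1)) * X ^ (b % d) := by ring
  rw [hring]
  exact Dvd.dvd.mul_right
    (dvd_sub (aux_Md_dvd_pow_sub_one d _) (aux_Md_dvd_pow_sub_one d _)) _

open Polynomial in
theorem stmt_5 (n d : ℕ) (hn : 0 < n) (hd : 2 ≤ d) :
    (∑ j ∈ Finset.range d, (X : ℤ[X]) ^ j) ∣
      ((∑ j ∈ Finset.range d, ((X : ℤ[X]) ^ n) ^ j) -
        (Nat.gcd n d : ℤ[X]) *
          ∑ j ∈ Finset.range (d / Nat.gcd n d), ((X : ℤ[X]) ^ Nat.gcd n d) ^ j) := by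
  set l := Nat.gcd n d with hl
  have hl0 : 0 < l := Nat.gcd_pos_of_pos_left d hn
  set d₁ := d / l with hd₁
  set n₁ := n / l with hn₁
  have hld : l * d₁ = d := Nat.mul_div_cancel' (Nat.gcd_dvd_right n d)
  have hln : l * n₁ = n := Nat.mul_div_cancel' (Nat.gcd_dvd_left n d)
  have hd₁0 : 0 < d₁ := Nat.div_pos (Nat.le_of_dvd (by omega) (Nat.gcd_dvd_right n d)) hl0
  have hcop : Nat.Coprime n₁ d₁ := Nat.coprime_div_gcd_div_gcd hl0
  -- sum over one block of length d₁
  have hblock : ∀ i : ℕ, ∑ x ∈ Finset.range d₁, (X : ℤ[X]) ^ (l * ((n₁ * (i * d₁ + x)) % d₁))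
      = ∑ j ∈ Finset.range d₁, ((X : ℤ[X]) ^ l) ^ j := by
    intro i
    have hmod : ∀ x, (n₁ * (i * d₁ + x)) % d₁ = (n₁ * x) % d₁ := by
      intro x
      have h' : n₁ * (i * d₁ + x) = n₁ * x + (n₁ * i) * d₁ := by ring
      rw [h', Nat.add_mul_mod_self_right]
    simp only [hmod]
    have hinj : Set.InjOn (fun x => (n₁ * x) % d₁) (Finset.range d₁) := by
      intro a ha b hb hab
      simp only [Finset.coe_range, Set.mem_Iio] at ha hb
      have h2 : a % d₁ = b % d₁ :=
        Nat.ModEq.cancel_left_of_coprime (by simpa using hcop.symm)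
          (show n₁ * a ≡ n₁ * b [MOD d₁] from hab)
      rwa [Nat.mod_eq_of_lt ha, Nat.mod_eq_of_lt hb] at h2
    have himg : Finset.image (fun x => (n₁ * x) % d₁) (Finset.range d₁) = Finset.range d₁ := by
      apply Finset.eq_of_subset_of_card_le
      · intro x hx
        simp only [Finset.mem_image] at hx
        obtain ⟨a, _, rfl⟩ := hx
        exact Finset.mem_range.mpr (Nat.mod_lt _ hd₁0)
      · rw [Finset.card_image_of_injOn hinj]
    calc ∑ x ∈ Finset.range d₁, (X : ℤ[X]) ^ (l * ((n₁ * x) % d₁))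
        = ∑ r ∈ Finset.image (fun x => (n₁ * x) % d₁) (Finset.range d₁),
            (X : ℤ[X]) ^ (l * r) := by
          rw [Finset.sum_image (fun a ha b hb h => hinj ha hb h)]
      _ = ∑ r ∈ Finset.range d₁, (X : ℤ[X]) ^ (l * r) := by rw [himg]
      _ = ∑ j ∈ Finset.range d₁, ((X : ℤ[X]) ^ l) ^ j := by simp [pow_mul]
  have hrep : ∀ k : ℕ, ∑ j ∈ Finset.range (k * d₁), (X : ℤ[X]) ^ (l * ((n₁ * j) % d₁))
      = k • ∑ j ∈ Finset.range d₁, ((X : ℤ[X]) ^ l) ^ j := by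
    intro k
    induction k with
    | zero => simp
    | succ m ih => rw [Nat.succ_mul, Finset.sum_range_add, ih, hblock m, succ_nsmul]
  have key : ∑ j ∈ Finset.range d, (X : ℤ[X]) ^ (l * ((n₁ * j) % d₁))
      = (l : ℤ[X]) * ∑ j ∈ Finset.range d₁, ((X : ℤ[X]) ^ l) ^ j := by
    rw [show d = l * d₁ from hld.symm, hrep l, nsmul_eq_mul]
  rw [← key]
  have hp : ∀ j, ((X : ℤ[X]) ^ n) ^ j = X ^ (n * j) := fun j => by rw [← pow_mul]
  simp only [hp]
  rw [← Finset.sum_sub_distrib]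
  apply Finset.dvd_sum
  intro j hj
  apply aux_Md_dvd_pow_sub_pow
  rw [← hld, ← hln, mul_assoc, Nat.mul_mod_mul_left, Nat.mul_mod_mul_left,
    Nat.mod_mod_of_dvd _ dvd_rfl]
end

section
/- For a positive integer m, the quotient (2^{2m} + 2^m + 1) / 21 is an integer if and only if m = 2n for some positive integer n not divisible by 3. -/
/-! Since `2 ^ 6 = 64 ≡ 1 (mod 21)`, whether `21` divides `2 ^ (2m) + 2 ^ m + 1` depends only on
`m mod 6`, and checking the six residues leaves exactly `m ≡ 2, 4 (mod 6)`, i.e. `m = 2n` with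
`3 ∤ n`. -/

theorem dvd_two_pow_two_mul_add_two_pow_add_one_iff (m : ℕ) :
    21 ∣ 2 ^ (2 * m) + 2 ^ m + 1 ↔ m % 6 = 2 ∨ m % 6 = 4 := by
  have h_two_pow_six : (2 : ZMod 21) ^ 6 = 1 := by decide
  rw [← ZMod.natCast_eq_zero_iff]
  push_cast
  rw [pow_eq_pow_mod (2 * m) h_two_pow_six, pow_eq_pow_mod m h_two_pow_six, Nat.mul_mod]
  have : m % 6 < 6 := Nat.mod_lt m (by norm_num)
  interval_cases m % 6 <;> decide

theorem stmt_7_general (m : ℕ) :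
    21 ∣ 2 ^ (2 * m) + 2 ^ m + 1 ↔ ∃ n : ℕ, 0 < n ∧ ¬ (3 ∣ n) ∧ m = 2 * n := by
  rw [dvd_two_pow_two_mul_add_two_pow_add_one_iff]
  constructor
  · intro h
    exact ⟨m / 2, by omega, by omega, by omega⟩
  · rintro ⟨n, hn, h3, rfl⟩
    omega

theorem stmt_7 (m : ℕ) (hm : 0 < m) :
    21 ∣ 2 ^ (2 * m) + 2 ^ m + 1 ↔ ∃ n : ℕ, 0 < n ∧ ¬ (3 ∣ n) ∧ m = 2 * n :=
  stmt_7_general m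
end

section
/- Let a ≥ 2, d ≥ 2, k, m be positive integers. If there exists a prime p dividing a^{kd} - 1 with ord_p(a) = kd, and (a^m - 1)(a^{kd} - 1) divides (a^{md} - 1)(a^k - 1), then k divides m. -/
theorem Nat.dvd_pow_sub_one_iff_orderOf_dvd {a : ℕ} (p : ℕ) (ha : a ≠ 0) (n : ℕ) :
    p ∣ a ^ n - 1 ↔ orderOf (a : ZMod p) ∣ n := by
  rw [← ZMod.natCast_eq_zero_iff, Nat.cast_sub (Nat.one_le_pow _ _ (Nat.pos_of_ne_zero ha)),
    Nat.cast_pow, Nat.cast_one, sub_eq_zero, orderOf_dvd_iff_pow_eq_one]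

theorem stmt_9_general (a d k m : ℕ) (hd : 2 ≤ d) (hk : 0 < k)
    (p : ℕ) (hp : p.Prime)
    (hord : orderOf (a : ZMod p) = k * d)
    (hdvd : (a ^ m - 1) * (a ^ (k * d) - 1) ∣ (a ^ (m * d) - 1) * (a ^ k - 1)) :
    k ∣ m := by
  have : Fact p.Prime := ⟨hp⟩
  have ha : a ≠ 0 := by
    rintro rfl
    rw [Nat.cast_zero, orderOf_zero] at hord
    exact (Nat.mul_pos hk (by omega)).ne hord
  have hp_dvd := Nat.dvd_pow_sub_one_iff_orderOf_dvd p ha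
  have hp_kd : p ∣ a ^ (k * d) - 1 := (hp_dvd _).2 hord.dvd
  rcases hp.dvd_mul.1 ((hp_kd.mul_left _).trans hdvd) with h | h
  · rw [hp_dvd, hord] at h
    exact Nat.dvd_of_mul_dvd_mul_right (by omega) h
  · rw [hp_dvd, hord] at h
    have : d ∣ 1 := Nat.dvd_of_mul_dvd_mul_left hk (by rwa [mul_one])
    have := Nat.le_of_dvd one_pos this
    omega

theorem stmt_9 (a d k m : ℕ) (ha : 2 ≤ a) (hd : 2 ≤ d) (hk : 0 < k) (hm : 0 < m)
    (p : ℕ) (hp : p.Prime) (hpd : p ∣ a ^ (k * d) - 1)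
    (hord : orderOf (a : ZMod p) = k * d)
    (hdvd : (a ^ m - 1) * (a ^ (k * d) - 1) ∣ (a ^ (m * d) - 1) * (a ^ k - 1)) :
    k ∣ m :=
  stmt_9_general a d k m hd hk p hp hord hdvd
end

section
/- Let b ≥ 2 be an integer and q ≥ 3 a prime dividing both n and d (n, d positive integers). Suppose p is an odd prime divisor of b^q - 1 with ord_p(b) = q. Then ν_p((b^n - 1)(b^d - 1)) > ν_p((b^{nd} - 1)(b - 1)), where ν_p denotes the p-adic valuation. Hence (b^n - 1)(b^d - 1) does not divide (b^{nd} - 1)(b - 1). -/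
/-!
Since `q = ord_p b`, the prime `p` divides `b ^ q - 1` but neither `b - 1` nor `q`
(as `q ∣ p - 1`). Lifting the exponent then gives `ν_p(b ^ m - 1) = E + ν_p(m)` for every
`m ≠ 0` with `q ∣ m`, where `E = ν_p(b ^ q - 1) ≥ 1`. Hence the left side has valuation
`2E + ν_p(n) + ν_p(d)` and the right side only `E + ν_p(n) + ν_p(d)`.
-/

lemma padicValNat_le_of_dvd {p a c : ℕ} [Fact p.Prime] (hc : c ≠ 0) (h : a ∣ c) :
    padicValNat p a ≤ padicValNat p c :=
  (padicValNat_dvd_iff_le hc).mp (pow_padicValNat_dvd.trans h)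

namespace ZMod

variable {p b : ℕ}

lemma dvd_sub_one_iff_natCast_eq_one (hb : 1 ≤ b) : p ∣ b - 1 ↔ (b : ZMod p) = 1 := by
  rw [← Nat.modEq_iff_dvd' hb, ← natCast_eq_natCast_iff, Nat.cast_one, eq_comm]

variable [Fact p.Prime]

lemma not_dvd_of_orderOf_natCast_ne_zero (h : orderOf (b : ZMod p) ≠ 0) : ¬ p ∣ b := by
  intro hpb
  rw [(natCast_eq_zero_iff b p).mpr hpb, orderOf_zero] at h
  exact h rfl

lemma not_dvd_sub_one_of_one_lt_orderOf (h : 1 < orderOf (b : ZMod p)) : ¬ p ∣ b - 1 := by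
  have hb : 1 ≤ b := Nat.one_le_iff_ne_zero.mpr (by rintro rfl; simp at h)
  rw [dvd_sub_one_iff_natCast_eq_one hb]
  intro hb1
  rw [hb1, orderOf_one] at h
  exact h.false

lemma dvd_pow_orderOf_natCast_sub_one (hb : 1 ≤ b) : p ∣ b ^ orderOf (b : ZMod p) - 1 := by
  rw [dvd_sub_one_iff_natCast_eq_one (Nat.one_le_pow _ _ hb), Nat.cast_pow, pow_orderOf_eq_one]

lemma orderOf_natCast_lt (hb : ¬ p ∣ b) : orderOf (b : ZMod p) < p := by
  have hb0 : (b : ZMod p) ≠ 0 := by rwa [Ne, natCast_eq_zero_iff]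
  have hp : p.Prime := Fact.out
  exact (Nat.le_of_dvd (Nat.sub_pos_of_lt hp.one_lt) (orderOf_dvd_card_sub_one hb0)).trans_lt
    (Nat.sub_one_lt hp.ne_zero)

theorem padicValNat_pow_sub_one_of_orderOf_dvd {n : ℕ} (hb : 2 ≤ b) (hp : Odd p) (hn : n ≠ 0)
    (hdvd : orderOf (b : ZMod p) ∣ n) :
    padicValNat p (b ^ n - 1) =
      padicValNat p (b ^ orderOf (b : ZMod p) - 1) + padicValNat p n := by
  set q := orderOf (b : ZMod p)
  obtain ⟨m, rfl⟩ := hdvd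
  have hq : q ≠ 0 := left_ne_zero_of_mul hn
  have hm : m ≠ 0 := right_ne_zero_of_mul hn
  have hpb : ¬ p ∣ b := not_dvd_of_orderOf_natCast_ne_zero hq
  have hpq : ¬ p ∣ q := Nat.not_dvd_of_pos_of_lt (Nat.pos_of_ne_zero hq) (orderOf_natCast_lt hpb)
  have lte := padicValNat.pow_sub_pow (x := b ^ q) (y := 1) hp (Nat.one_lt_pow hq hb)
    (by simpa using dvd_pow_orderOf_natCast_sub_one (p := p) (by omega))
    (fun h => hpb ((Fact.out : p.Prime).dvd_of_dvd_pow h)) hm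
  rw [one_pow, ← pow_mul] at lte
  rw [lte, padicValNat.mul hq hm, padicValNat.eq_zero_of_not_dvd hpq, zero_add]

end ZMod

theorem stmt_10_general (b n d q p : ℕ) (hb : 2 ≤ b) (hn : 0 < n) (hd : 0 < d)
    (hq : q.Prime) (hqn : q ∣ n) (hqd : q ∣ d)
    (hp : p.Prime) (hpodd : p ≠ 2)
    (hord : orderOf (b : ZMod p) = q) :
    padicValNat p ((b ^ n - 1) * (b ^ d - 1)) >
        padicValNat p ((b ^ (n * d) - 1) * (b - 1)) ∧
      ¬ ((b ^ n - 1) * (b ^ d - 1) ∣ (b ^ (n * d) - 1) * (b - 1)) := by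
  have : Fact p.Prime := ⟨hp⟩
  have lte {m : ℕ} (hm : m ≠ 0) (hqm : q ∣ m) :=
    ZMod.padicValNat_pow_sub_one_of_orderOf_dvd hb (hp.odd_of_ne_two hpodd) hm (hord ▸ hqm)
  have pos {m : ℕ} (hm : m ≠ 0) : b ^ m - 1 ≠ 0 :=
    Nat.sub_ne_zero_of_lt (Nat.one_lt_pow hm hb)
  have hE : 1 ≤ padicValNat p (b ^ q - 1) :=
    one_le_padicValNat_of_dvd (pos hq.ne_zero)
      (hord ▸ ZMod.dvd_pow_orderOf_natCast_sub_one (by omega))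
  have hb1 : padicValNat p (b - 1) = 0 :=
    padicValNat.eq_zero_of_not_dvd (ZMod.not_dvd_sub_one_of_one_lt_orderOf (hord ▸ hq.one_lt))
  have hrhs : (b ^ (n * d) - 1) * (b - 1) ≠ 0 := mul_ne_zero (pos (by positivity)) (by omega)
  have hgt : padicValNat p ((b ^ n - 1) * (b ^ d - 1)) >
      padicValNat p ((b ^ (n * d) - 1) * (b - 1)) := by
    rw [padicValNat.mul (pos hn.ne') (pos hd.ne'), padicValNat.mul (pos (by positivity)) (by omega),
      lte hn.ne' hqn, lte hd.ne' hqd, lte (by positivity) (hqn.mul_right d),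
      padicValNat.mul hn.ne' hd.ne', hord, hb1]
    omega
  exact ⟨hgt, fun hdvd => (padicValNat_le_of_dvd hrhs hdvd).not_gt hgt⟩

theorem stmt_10 (b n d q p : ℕ) (hb : 2 ≤ b) (hn : 0 < n) (hd : 0 < d)
    (hq : q.Prime) (hq3 : 3 ≤ q) (hqn : q ∣ n) (hqd : q ∣ d)
    (hp : p.Prime) (hpodd : p ≠ 2) (hpb : p ∣ b ^ q - 1)
    (hord : orderOf (b : ZMod p) = q) :
    padicValNat p ((b ^ n - 1) * (b ^ d - 1)) >
        padicValNat p ((b ^ (n * d) - 1) * (b - 1)) ∧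
      ¬ ((b ^ n - 1) * (b ^ d - 1) ∣ (b ^ (n * d) - 1) * (b - 1)) :=
  stmt_10_general b n d q p hb hn hd hq hqn hqd hp hpodd hord
end

section
/- Let b = 2^t - 1 with t ≥ 2, and let n, d be even positive integers. Then ν_2((b^n - 1)(b^d - 1)) > ν_2((b^{nd} - 1)(b - 1)), so (b^n - 1)(b^d - 1) does not divide (b^{nd} - 1)(b - 1). -/
/-!
Write `b = 2 ^ t - 1`. Since `b + 1 = 2 ^ t` and `b - 1 = 2 (2 ^ (t - 1) - 1)` with the second
factor odd, the lifting-the-exponent lemma for `p = 2` gives `ν₂(b ^ m - 1) = t + ν₂ m` for every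
even `m > 0`. Hence the left side has valuation `2t + ν₂ n + ν₂ d`, while the right side has
valuation `(t + ν₂ n + ν₂ d) + 1`, which is smaller because `t ≥ 2`.
-/

theorem Nat.not_dvd_of_padicValNat_lt {p a b : ℕ} [Fact p.Prime] (hb : b ≠ 0)
    (h : padicValNat p b < padicValNat p a) : ¬ a ∣ b := fun hab =>
  h.not_ge <| (padicValNat_dvd_iff_le hb).1 (pow_padicValNat_dvd.trans hab)

theorem Nat.odd_two_pow_sub_one {k : ℕ} (hk : k ≠ 0) : Odd (2 ^ k - 1) :=
  Nat.Even.sub_odd Nat.one_le_two_pow ((Nat.even_pow' hk).2 even_two) odd_one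

theorem padicValNat_two_two_pow_sub_two {t : ℕ} (ht : 2 ≤ t) : padicValNat 2 (2 ^ t - 2) = 1 := by
  have hsplit : 2 ^ t - 2 = 2 * (2 ^ (t - 1) - 1) := by
    rw [Nat.mul_sub, ← pow_succ', Nat.sub_add_cancel (by omega : 1 ≤ t)]
  have hodd : Odd (2 ^ (t - 1) - 1) := Nat.odd_two_pow_sub_one (by omega)
  rw [hsplit, padicValNat.mul two_ne_zero hodd.pos.ne', padicValNat.self one_lt_two,
    padicValNat.eq_zero_of_not_dvd hodd.not_two_dvd_nat]

theorem padicValNat_two_pow_sub_one_pow_sub_one {t m : ℕ} (ht : 2 ≤ t) (hm : m ≠ 0)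
    (hme : Even m) : padicValNat 2 ((2 ^ t - 1) ^ m - 1) = t + padicValNat 2 m := by
  have h4 : 4 ≤ 2 ^ t := Nat.pow_le_pow_right two_pos ht
  have hpred : 2 ^ t - 1 - 1 = 2 ^ t - 2 := by omega
  have hlte := padicValNat.pow_two_sub_pow (x := 2 ^ t - 1) (y := 1) (by omega)
    (by rw [hpred]; exact Nat.dvd_sub (dvd_pow_self 2 (by omega)) (dvd_refl 2))
    (Nat.odd_two_pow_sub_one (by omega)).not_two_dvd_nat hm hme
  rw [one_pow, Nat.sub_add_cancel Nat.one_le_two_pow, padicValNat.prime_pow, hpred,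
    padicValNat_two_two_pow_sub_two ht] at hlte
  omega

theorem stmt_11 (t n d : ℕ) (ht : 2 ≤ t) (hn : 0 < n) (hd : 0 < d)
    (hne : Even n) (hde : Even d) :
    padicValNat 2 (((2 ^ t - 1) ^ n - 1) * ((2 ^ t - 1) ^ d - 1)) >
        padicValNat 2 (((2 ^ t - 1) ^ (n * d) - 1) * ((2 ^ t - 1) - 1)) ∧
      ¬ (((2 ^ t - 1) ^ n - 1) * ((2 ^ t - 1) ^ d - 1) ∣
          ((2 ^ t - 1) ^ (n * d) - 1) * ((2 ^ t - 1) - 1)) := by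
  have h4 : 4 ≤ 2 ^ t := Nat.pow_le_pow_right two_pos ht
  have hpred : 2 ^ t - 1 - 1 = 2 ^ t - 2 := by omega
  have hpos {m : ℕ} (hm : m ≠ 0) : (2 ^ t - 1) ^ m - 1 ≠ 0 :=
    Nat.sub_ne_zero_of_lt (Nat.one_lt_pow hm (by omega))
  have hnd : n * d ≠ 0 := Nat.mul_ne_zero hn.ne' hd.ne'
  have hlt : padicValNat 2 (((2 ^ t - 1) ^ (n * d) - 1) * ((2 ^ t - 1) - 1)) <
      padicValNat 2 (((2 ^ t - 1) ^ n - 1) * ((2 ^ t - 1) ^ d - 1)) := by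
    rw [padicValNat.mul (hpos hn.ne') (hpos hd.ne'), padicValNat.mul (hpos hnd) (by omega),
      padicValNat_two_pow_sub_one_pow_sub_one ht hn.ne' hne,
      padicValNat_two_pow_sub_one_pow_sub_one ht hd.ne' hde,
      padicValNat_two_pow_sub_one_pow_sub_one ht hnd (hne.mul_right d),
      padicValNat.mul hn.ne' hd.ne', hpred, padicValNat_two_two_pow_sub_two ht]
    omega
  exact ⟨hlt, Nat.not_dvd_of_padicValNat_lt (Nat.mul_ne_zero (hpos hnd) (by omega)) hlt⟩
end

section
/- Let a ≥ 2, d ≥ 2, k, m be positive integers. If a^{kd} - 1 divides (a^{md} - 1)(a^k - 1), then k divides m. -/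
/-!
Put `q = a ^ k` and `g = gcd k m`. Since `gcd (a ^ b - 1) (a ^ c - 1) = a ^ gcd b c - 1`, the
hypothesis upgrades to `q ^ d - 1 ∣ (a ^ (g * d) - 1) * (q - 1)`. Comparing sizes forces
`a ^ (g * d) > q ^ (d - 1)`, i.e. `g * d > k * (d - 1)`; as `g` is a divisor of `k` and `d ≥ 2`,
a proper divisor would give `g * d ≤ k * d / 2 ≤ k * (d - 1)`, so `g = k`.
-/

namespace Nat

lemma dvd_pow_gcd_sub_one_mul {n a b c e : ℕ} (hb : n ∣ (a ^ b - 1) * e)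
    (hc : n ∣ (a ^ c - 1) * e) : n ∣ (a ^ gcd b c - 1) * e := by
  simpa only [gcd_mul_right, pow_sub_one_gcd_pow_sub_one] using dvd_gcd hb hc

lemma pow_pred_lt_of_pow_sub_one_le {q d x : ℕ} (hq : 2 ≤ q) (hd : 1 ≤ d)
    (h : q ^ d - 1 ≤ (x - 1) * (q - 1)) : q ^ (d - 1) < x := by
  obtain ⟨e, rfl⟩ := exists_add_of_le hd
  rw [add_tsub_cancel_left]
  by_contra! hx
  have hp : 1 ≤ q ^ e := one_le_pow e q (by omega)
  have hmono : (x - 1) * (q - 1) ≤ (q ^ e - 1) * (q - 1) := by gcongr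
  have hpq : (q ^ e - 1) * (q - 1) < q ^ e * q - 1 := by
    zify [hp, one_le_two.trans hq, one_le_mul hp (one_le_two.trans hq)]
    nlinarith
  rw [add_comm, pow_succ] at h
  omega

lemma eq_of_dvd_of_mul_pred_lt {g k d : ℕ} (hg : g ∣ k) (hk : 0 < k) (hd : 2 ≤ d)
    (h : k * (d - 1) < g * d) : g = k := by
  obtain ⟨t, rfl⟩ := hg
  obtain rfl | ht : t = 1 ∨ 2 ≤ t := by
    rcases t with _ | _ | t
    · simp at hk
    · simp
    · omega
  · simp
  · have : g * 2 * (d - 1) ≤ g * t * (d - 1) := by gcongr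
    have : g * d ≤ g * 2 * (d - 1) := by
      rw [mul_assoc]; exact mul_le_mul_left g (by omega)
    omega

end Nat

theorem stmt_13_general (a d k m : ℕ) (ha : 2 ≤ a) (hd : 2 ≤ d) (hk : 0 < k)
    (hdvd : a ^ (k * d) - 1 ∣ (a ^ (m * d) - 1) * (a ^ k - 1)) :
    k ∣ m := by
  set g := Nat.gcd k m
  have hq : 2 ≤ a ^ k := ha.trans (Nat.le_self_pow hk.ne' a)
  have hgd : 1 < a ^ (g * d) :=
    Nat.one_lt_pow (Nat.mul_ne_zero (Nat.gcd_pos_of_pos_left m hk).ne' (by omega)) ha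
  have hdvd_g : a ^ (k * d) - 1 ∣ (a ^ (g * d) - 1) * (a ^ k - 1) := by
    have := Nat.dvd_pow_gcd_sub_one_mul (dvd_mul_right _ (a ^ k - 1)) hdvd
    rwa [Nat.gcd_mul_right] at this
  have hle := Nat.le_of_dvd (Nat.mul_pos (by omega) (by omega)) hdvd_g
  have hlt : a ^ (k * (d - 1)) < a ^ (g * d) := by
    rw [pow_mul]
    exact Nat.pow_pred_lt_of_pow_sub_one_le hq (by omega) (by rwa [← pow_mul])
  have hgk : g = k := Nat.eq_of_dvd_of_mul_pred_lt (Nat.gcd_dvd_left k m) hk hd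
    ((Nat.pow_lt_pow_iff_right ha).mp hlt)
  exact hgk ▸ Nat.gcd_dvd_right k m

theorem stmt_13 (a d k m : ℕ) (ha : 2 ≤ a) (hd : 2 ≤ d) (hk : 0 < k) (hm : 0 < m)
    (hdvd : a ^ (k * d) - 1 ∣ (a ^ (m * d) - 1) * (a ^ k - 1)) :
    k ∣ m :=
  stmt_13_general a d k m ha hd hk hdvd
end

section
/- Let b ≥ 2, n ≥ 1, d ≥ 2 be integers with gcd(n, d) = g, and let M = (b^g - 1)/(b - 1). Then (b^{nd}-1)/(b^n-1) ≡ d (mod M) and (b^{nd}-1)/(b^d-1) ≡ n (mod M). -/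
/-! Write `x = b ^ m` with `g ∣ m`. Then `(x ^ c - 1) / (x - 1) = 1 + x + ⋯ + x ^ (c - 1)`, and
`M` divides `b ^ g - 1`, which divides `x - 1`; so every term is `1` modulo `M` and the sum is `c`.
Apply this with `(m, c) = (n, d)` and `(m, c) = (d, n)`. -/

open Finset

namespace Nat

theorem geomSum_modEq_of_modEq_one {x M : ℕ} (hx : x ≡ 1 [MOD M]) (c : ℕ) :
    ∑ i ∈ range c, x ^ i ≡ c [MOD M] := by
  calc ∑ i ∈ range c, x ^ i ≡ ∑ _i ∈ range c, 1 [MOD M] :=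
        ModEq.sum fun i _ => by simpa using hx.pow i
    _ = c := by simp

theorem pow_sub_one_div_sub_one_modEq {x M : ℕ} (hx₂ : 2 ≤ x) (hx : x ≡ 1 [MOD M]) (c : ℕ) :
    (x ^ c - 1) / (x - 1) ≡ c [MOD M] :=
  geomSum_eq hx₂ c ▸ geomSum_modEq_of_modEq_one hx c

theorem pow_modEq_one_of_dvd {b g m : ℕ} (hb : 0 < b) (hgm : g ∣ m) :
    b ^ m ≡ 1 [MOD (b ^ g - 1) / (b - 1)] := by
  refine ((modEq_iff_dvd' (one_le_pow m b hb)).mpr ?_).symm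
  exact (div_dvd_of_dvd (sub_one_dvd_pow_sub_one b g)).trans (pow_sub_one_dvd_pow_sub_one b hgm)

theorem pow_mul_sub_one_div_pow_sub_one_modEq {b g m : ℕ} (hb : 2 ≤ b) (hm : 0 < m)
    (hgm : g ∣ m) (c : ℕ) :
    (b ^ (m * c) - 1) / (b ^ m - 1) ≡ c [MOD (b ^ g - 1) / (b - 1)] := by
  have hbm : 2 ≤ b ^ m := hb.trans (le_self_pow hm.ne' b)
  rw [pow_mul]
  exact pow_sub_one_div_sub_one_modEq hbm (pow_modEq_one_of_dvd (by omega) hgm) c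

end Nat

theorem stmt_14 (b n d : ℕ) (hb : 2 ≤ b) (hn : 1 ≤ n) (hd : 2 ≤ d) :
    (b ^ (n * d) - 1) / (b ^ n - 1) ≡ d [MOD (b ^ Nat.gcd n d - 1) / (b - 1)] ∧
      (b ^ (n * d) - 1) / (b ^ d - 1) ≡ n [MOD (b ^ Nat.gcd n d - 1) / (b - 1)] := by
  refine ⟨Nat.pow_mul_sub_one_div_pow_sub_one_modEq hb hn (Nat.gcd_dvd_left n d) d, ?_⟩
  rw [mul_comm n d]
  exact Nat.pow_mul_sub_one_div_pow_sub_one_modEq hb (by omega) (Nat.gcd_dvd_right n d) n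
end

section
/- Let b ≥ 2, n ≥ 1, d ≥ 2 be integers. If (b^n - 1)(b^d - 1) divides (b^{nd} - 1)(b - 1), then gcd(n, d) = 1. -/
private lemma emult_eq_fact {p m : ℕ} (hp : p.Prime) (hm : m ≠ 0) :
    emultiplicity p m = (m.factorization p : ℕ∞) := by
  rw [← Nat.multiplicity_eq_factorization hp hm]
  exact (Nat.finiteMultiplicity_iff.mpr
    ⟨hp.ne_one, Nat.pos_of_ne_zero hm⟩).emultiplicity_eq_multiplicity

private lemma lte_odd {p x k : ℕ} (hp : p.Prime) (hodd : Odd p) (hx2 : 2 ≤ x)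
    (hdvd : p ∣ x - 1) (hndvd : ¬ p ∣ x) (hk : k ≠ 0) :
    (x ^ k - 1).factorization p = (x - 1).factorization p + k.factorization p := by
  have h := Nat.emultiplicity_pow_sub_pow hp hodd (x := x) (y := 1) (by simpa using hdvd) hndvd k
  simp only [one_pow] at h
  have hxk : x ^ k - 1 ≠ 0 := by
    have : 2 ≤ x ^ k := le_trans hx2 (Nat.le_self_pow hk x)
    omega
  rw [emult_eq_fact hp hxk, emult_eq_fact hp (by omega), emult_eq_fact hp hk, ← Nat.cast_add,
    Nat.cast_inj] at h
  exact h

private lemma lte_two {x k : ℕ} (hx2 : 2 ≤ x) (hdvd : 4 ∣ x - 1) (hk : k ≠ 0) :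
    (x ^ k - 1).factorization 2 = (x - 1).factorization 2 + k.factorization 2 := by
  obtain ⟨t, ht⟩ := hdvd
  have hx : x = 4 * t + 1 := by omega
  have hxo : ¬ (2:ℤ) ∣ (x:ℤ) := by
    rw [show ((x:ℤ)) = 4 * t + 1 by exact_mod_cast congrArg (Nat.cast : ℕ → ℤ) hx]
    omega
  have h4 : (4:ℤ) ∣ (x:ℤ) - 1 := by
    rw [show ((x:ℤ)) = 4 * t + 1 by exact_mod_cast congrArg (Nat.cast : ℕ → ℤ) hx]
    omega
  have h := Int.two_pow_sub_pow' (x := (x:ℤ)) (y := 1) k h4 hxo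
  simp only [one_pow] at h
  have key : ∀ m : ℕ, emultiplicity (2:ℤ) (m:ℤ) = emultiplicity 2 m := by
    intro m
    exact_mod_cast Int.natCast_emultiplicity 2 m
  have hxk1 : 1 ≤ x ^ k := Nat.one_le_pow _ _ (by omega)
  have e1 : ((x:ℤ)) ^ k - 1 = ((x ^ k - 1 : ℕ) : ℤ) := by
    push_cast [hxk1]
    ring
  have e2 : ((x:ℤ)) - 1 = ((x - 1 : ℕ) : ℤ) := by
    push_cast [show 1 ≤ x by omega]
    ring
  rw [e1, e2, key, key, key] at h
  have hxk : x ^ k - 1 ≠ 0 := by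
    have : 2 ≤ x ^ k := le_trans hx2 (Nat.le_self_pow hk x)
    omega
  rw [emult_eq_fact Nat.prime_two hxk, emult_eq_fact Nat.prime_two (by omega),
    emult_eq_fact Nat.prime_two hk, ← Nat.cast_add, Nat.cast_inj] at h
  exact h

theorem stmt_15 (b n d : ℕ) (hb : 2 ≤ b) (hn : 1 ≤ n) (hd : 2 ≤ d)
    (hdvd : (b ^ n - 1) * (b ^ d - 1) ∣ (b ^ (n * d) - 1) * (b - 1)) :
    Nat.gcd n d = 1 := by
  by_contra hg1
  set g := Nat.gcd n d with hgdef
  have hn0 : n ≠ 0 := by omega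
  have hd0 : d ≠ 0 := by omega
  have hg0 : g ≠ 0 := Nat.gcd_ne_zero_left hn0
  have hg2 : 2 ≤ g := by omega
  have hgn : g ∣ n := Nat.gcd_dvd_left n d
  have hgd : g ∣ d := Nat.gcd_dvd_right n d
  have hpow : ∀ m : ℕ, m ≠ 0 → b ^ m - 1 ≠ 0 := by
    intro m hm
    have : 2 ≤ b ^ m := le_trans hb (Nat.le_self_pow hm b)
    omega
  have hA := hpow n hn0
  have hB := hpow d hd0
  have hM := hpow (n * d) (mul_ne_zero hn0 hd0)
  have hb10 : b - 1 ≠ 0 := by omega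
  have KI : ∀ p : ℕ, (b ^ n - 1).factorization p + (b ^ d - 1).factorization p
      ≤ (b ^ (n * d) - 1).factorization p + (b - 1).factorization p := by
    intro p
    have h := (Nat.factorization_le_iff_dvd (mul_ne_zero hA hB)
      (mul_ne_zero hM hb10)).mpr hdvd
    rw [Nat.factorization_mul hA hB, Nat.factorization_mul hM hb10] at h
    simpa using Finsupp.le_def.mp h p
  by_cases hcase : b % 4 = 3 ∧ 2 ∣ g
  · obtain ⟨hb4, hg2dvd⟩ := hcase
    obtain ⟨n', hn'⟩ : 2 ∣ n := dvd_trans hg2dvd hgn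
    obtain ⟨d', hd'⟩ : 2 ∣ d := dvd_trans hg2dvd hgd
    have hn'0 : n' ≠ 0 := by omega
    have hd'0 : d' ≠ 0 := by omega
    have hb2 : 2 ≤ b ^ 2 := le_trans hb (Nat.le_self_pow two_ne_zero b)
    have h8 : 8 ∣ b ^ 2 - 1 := by
      obtain ⟨t, ht⟩ : ∃ t, b = 4 * t + 3 := ⟨b / 4, by omega⟩
      refine ⟨2 * t ^ 2 + 3 * t + 1, ?_⟩
      have : b ^ 2 = 8 * (2 * t ^ 2 + 3 * t + 1) + 1 := by rw [ht]; ring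
      omega
    have h4 : 4 ∣ b ^ 2 - 1 := dvd_trans (by norm_num) h8
    have hc3 : 3 ≤ (b ^ 2 - 1).factorization 2 := by
      rw [← Nat.Prime.pow_dvd_iff_le_factorization Nat.prime_two (hpow 2 two_ne_zero)]
      simpa using h8
    have hl1 : (b - 1).factorization 2 = 1 := by
      have h1 : 2 ^ 1 ∣ b - 1 := by simpa using (show 2 ∣ b - 1 by omega)
      have h2 : ¬ 2 ^ 2 ∣ b - 1 := by simpa using (show ¬ 4 ∣ b - 1 by omega)
      rw [Nat.Prime.pow_dvd_iff_le_factorization Nat.prime_two hb10] at h1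
      rw [Nat.Prime.pow_dvd_iff_le_factorization Nat.prime_two hb10] at h2
      omega
    have eA : (b ^ n - 1).factorization 2
        = (b ^ 2 - 1).factorization 2 + n'.factorization 2 := by
      rw [hn', pow_mul]
      exact lte_two hb2 h4 hn'0
    have eB : (b ^ d - 1).factorization 2
        = (b ^ 2 - 1).factorization 2 + d'.factorization 2 := by
      rw [hd', pow_mul]
      exact lte_two hb2 h4 hd'0
    have eM : (b ^ (n * d) - 1).factorization 2
        = (b ^ 2 - 1).factorization 2 + (n' * d).factorization 2 := by
      rw [show n * d = 2 * (n' * d) by rw [hn']; ring, pow_mul]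
      exact lte_two hb2 h4 (mul_ne_zero hn'0 hd0)
    have eS : (n' * d).factorization 2 = n'.factorization 2 + d.factorization 2 := by
      rw [Nat.factorization_mul hn'0 hd0, Finsupp.add_apply]
    have eD : d.factorization 2 = 1 + d'.factorization 2 := by
      rw [hd', Nat.factorization_mul two_ne_zero hd'0, Finsupp.add_apply,
        Nat.Prime.factorization_self Nat.prime_two]
    have := KI 2
    omega
  · set S := ∑ i ∈ Finset.range g, b ^ i with hS
    have hb1 : 1 ≤ b := by omega
    have hbg : 1 ≤ b ^ g := Nat.one_le_pow _ _ (by omega)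
    have hSmulN : S * (b - 1) = b ^ g - 1 := by
      zify [hb1, hbg]
      rw [hS]
      push_cast
      exact geom_sum_mul _ _
    have hgS : g < S := by
      calc g = ∑ _i ∈ Finset.range g, 1 := by simp
      _ < S := by
        refine Finset.sum_lt_sum (fun i _ => Nat.one_le_pow _ _ (by omega))
          ⟨1, Finset.mem_range.mpr (by omega), by simpa using (show 1 < b by omega)⟩
    have hS0 : S ≠ 0 := by omega
    by_cases hall : ∀ p : ℕ, p.Prime → p ∣ S → p ∣ b - 1
    · have hSg : S ∣ g := by
        rw [← Nat.factorization_le_iff_dvd hS0 hg0]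
        rw [Finsupp.le_def]
        intro p
        by_cases hp : p.Prime
        · by_cases hpS : p ∣ S
          · have hpb1 : p ∣ b - 1 := hall p hp hpS
            have hpb : ¬ p ∣ b := by
              intro hpb
              have : p ∣ 1 := by
                have := Nat.dvd_sub hpb hpb1
                simpa [show b - (b - 1) = 1 by omega] using this
              exact hp.one_lt.ne' (Nat.dvd_one.mp this)
            have hfact : (b ^ g - 1).factorization p
                = (b - 1).factorization p + g.factorization p := by
              rcases hp.eq_two_or_odd' with h2 | hodd
              · subst h2
                have hbodd : b % 2 = 1 := by
                  rcases Nat.even_or_odd b with he | ho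
                  · exact absurd hpb1 (by
                      obtain ⟨k, hk⟩ := he
                      omega)
                  · omega
                have hSpar : S % 2 = g % 2 := by
                  rw [hS, Finset.sum_nat_mod]
                  rw [Finset.sum_congr rfl (fun i _ => by
                    rw [Nat.pow_mod, hbodd, one_pow])]
                  simp
                have hgeven : 2 ∣ g := by
                  obtain ⟨k, hk⟩ := hpS
                  omega
                have hb4 : b % 4 ≠ 3 := fun h => hcase ⟨h, hgeven⟩
                have h4 : 4 ∣ b - 1 := by omega
                exact lte_two hb h4 hg0
              · exact lte_odd hp hodd hb hpb1 hpb hg0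
            have hmul : (b ^ g - 1).factorization p
                = S.factorization p + (b - 1).factorization p := by
              rw [← hSmulN, Nat.factorization_mul hS0 hb10, Finsupp.add_apply]
            omega
          · rw [Nat.factorization_eq_zero_of_not_dvd hpS]
            exact Nat.zero_le _
        · rw [Nat.factorization_eq_zero_of_not_prime _ hp]
          exact Nat.zero_le _
      exact absurd (Nat.le_of_dvd (by omega) hSg) (by omega)
    · push_neg at hall
      obtain ⟨p, hp, hpS, hpb1⟩ := hall
      have hSdvd : S ∣ b ^ g - 1 := ⟨b - 1, hSmulN.symm⟩
      have hpbg : p ∣ b ^ g - 1 := hpS.trans hSdvd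
      have hpodd : Odd p := by
        rcases hp.eq_two_or_odd' with h2 | hodd
        · exfalso
          subst h2
          rcases Nat.even_or_odd b with he | ho
          · obtain ⟨k, hk⟩ := he
            have h2bg : 2 ∣ b ^ g := dvd_pow (show 2 ∣ b by omega) hg0
            have h1 : (2:ℕ) ∣ 1 := by
              have h := Nat.dvd_sub h2bg hpbg
              rwa [show b ^ g - (b ^ g - 1) = 1 by omega] at h
            norm_num at h1
          · obtain ⟨k, hk⟩ := ho
            exact hpb1 (by omega)
        · exact hodd
      have hpb : ¬ p ∣ b := by
        intro hpb
        have h1 : p ∣ b ^ g := dvd_pow hpb hg0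
        have : p ∣ 1 := by
          have := Nat.dvd_sub h1 hpbg
          simpa [show b ^ g - (b ^ g - 1) = 1 by omega] using this
        exact hp.one_lt.ne' (Nat.dvd_one.mp this)
      haveI : Fact p.Prime := ⟨hp⟩
      set e := orderOf (b : ZMod p) with he
      have hbne : (b : ZMod p) ≠ 0 := by
        rw [Ne, ZMod.natCast_eq_zero_iff]
        exact hpb
      have hbg1 : (b : ZMod p) ^ g = 1 := by
        have h0 : ((b ^ g - 1 : ℕ) : ZMod p) = 0 :=
          (ZMod.natCast_eq_zero_iff _ _).mpr hpbg
        have h1 : (b : ZMod p) ^ g = ((b ^ g : ℕ) : ZMod p) := by push_cast; rfl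
        rw [h1, show b ^ g = (b ^ g - 1) + 1 by omega, Nat.cast_add, h0, Nat.cast_one, zero_add]
      have heg : e ∣ g := orderOf_dvd_of_pow_eq_one hbg1
      have hep : e ∣ p - 1 :=
        orderOf_dvd_of_pow_eq_one (ZMod.pow_card_sub_one_eq_one hbne)
      have hp3 : 3 ≤ p := by
        have := hp.two_le
        rcases hpodd with ⟨k, hk⟩
        omega
      have he0 : e ≠ 0 := by
        intro h
        rw [h] at hep
        have := Nat.eq_zero_of_zero_dvd hep
        omega
      have hpe : ¬ p ∣ e := by
        intro h
        have h1 := Nat.le_of_dvd (Nat.pos_of_ne_zero he0) h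
        have h2 := Nat.le_of_dvd (by omega) hep
        omega
      have hpe1 : p ∣ b ^ e - 1 := by
        rw [← ZMod.natCast_eq_zero_iff]
        have h1 : ((b ^ e : ℕ) : ZMod p) = 1 := by
          push_cast
          exact pow_orderOf_eq_one _
        have h2 : b ^ e = (b ^ e - 1) + 1 := by
          have : 1 ≤ b ^ e := Nat.one_le_pow _ _ (by omega)
          omega
        rw [h2, Nat.cast_add, Nat.cast_one] at h1
        simpa using h1
      have hpbe : ¬ p ∣ b ^ e := fun h => hpb (hp.dvd_of_dvd_pow h)
      have hbe2 : 2 ≤ b ^ e := le_trans hb (Nat.le_self_pow he0 b)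
      obtain ⟨n₁, hn₁⟩ : e ∣ n := heg.trans hgn
      obtain ⟨d₁, hd₁⟩ : e ∣ d := heg.trans hgd
      have hn₁0 : n₁ ≠ 0 := by
        intro h; rw [h, mul_zero] at hn₁; omega
      have hd₁0 : d₁ ≠ 0 := by
        intro h; rw [h, mul_zero] at hd₁; omega
      have hv1 : 1 ≤ (b ^ e - 1).factorization p :=
        hp.factorization_pos_of_dvd (hpow e he0) hpe1
      have eA : (b ^ n - 1).factorization p
          = (b ^ e - 1).factorization p + n₁.factorization p := by
        rw [hn₁, pow_mul]
        exact lte_odd hp hpodd hbe2 hpe1 hpbe hn₁0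
      have eB : (b ^ d - 1).factorization p
          = (b ^ e - 1).factorization p + d₁.factorization p := by
        rw [hd₁, pow_mul]
        exact lte_odd hp hpodd hbe2 hpe1 hpbe hd₁0
      have eM : (b ^ (n * d) - 1).factorization p
          = (b ^ e - 1).factorization p + (n₁ * d).factorization p := by
        rw [show n * d = e * (n₁ * d) by rw [hn₁]; ring, pow_mul]
        exact lte_odd hp hpodd hbe2 hpe1 hpbe (mul_ne_zero hn₁0 hd0)
      have eS : (n₁ * d).factorization p = n₁.factorization p + d.factorization p := by
        rw [Nat.factorization_mul hn₁0 hd0, Finsupp.add_apply]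
      have eD : d.factorization p = d₁.factorization p := by
        rw [hd₁, Nat.factorization_mul (by omega : e ≠ 0) hd₁0, Finsupp.add_apply,
          Nat.factorization_eq_zero_of_not_dvd hpe, zero_add]
      have e0 : (b - 1).factorization p = 0 :=
        Nat.factorization_eq_zero_of_not_dvd hpb1
      have := KI p
      omega
end

section
/- For integers a ≥ 2, k ≥ 1, d ≥ 2, the multiplicative order of a modulo M_d(a^k) equals kd, where M_d(x) = ∑_{j=0}^{d-1} x^j. -/
theorem stmt_16 (a k d : ℕ) (ha : 2 ≤ a) (hk : 0 < k) (hd : 2 ≤ d) :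
    orderOf (a : ZMod (∑ j ∈ Finset.range d, (a ^ k) ^ j)) = k * d := by
  set N := ∑ j ∈ Finset.range d, (a ^ k) ^ j with hN
  have hkey : a ^ (k * (d - 1)) < N := by
    have hsplit : N = (∑ j ∈ Finset.range (d - 1), (a ^ k) ^ j) + (a ^ k) ^ (d - 1) := by
      rw [hN, ← Finset.sum_range_succ, Nat.sub_add_cancel (by omega : 1 ≤ d)]
    have hpos : 0 < ∑ j ∈ Finset.range (d - 1), (a ^ k) ^ j :=
      Finset.sum_pos (fun i _ => by positivity) (Finset.nonempty_range_iff.mpr (by omega))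
    rw [hsplit, pow_mul]
    exact lt_add_of_pos_left _ hpos
  have hN1 : 1 < N := lt_of_le_of_lt (Nat.one_le_pow _ _ (by omega)) hkey
  haveI : NeZero N := ⟨by omega⟩
  have h0 : ∑ j ∈ Finset.range d, ((a : ZMod N) ^ k) ^ j = 0 := by
    have := ZMod.natCast_self N
    rw [hN] at this
    push_cast at this
    exact this
  have hx : ((a : ZMod N) ^ k) ^ d = 1 := by
    have hgeom := geom_sum_mul ((a : ZMod N) ^ k) d
    rw [h0, zero_mul] at hgeom
    have := sub_eq_zero.mp hgeom.symm
    exact this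
  have hpow : (a : ZMod N) ^ (k * d) = 1 := by rw [pow_mul]; exact hx
  have hdvd : orderOf (a : ZMod N) ∣ k * d := orderOf_dvd_of_pow_eq_one hpow
  set m := orderOf (a : ZMod N) with hm
  have hm0 : 0 < m :=
    orderOf_pos_iff.mpr (isOfFinOrder_iff_pow_eq_one.mpr ⟨k * d, by positivity, hpow⟩)
  by_contra hne
  have hmlt : m < k * d := lt_of_le_of_ne (Nat.le_of_dvd (by positivity) hdvd) hne
  obtain ⟨c, hc⟩ := hdvd
  have hc2 : 2 ≤ c := by
    rcases Nat.lt_or_ge c 2 with h | h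
    · interval_cases c
      · simp at hc; omega
      · omega
    · exact h
  have h2m : 2 * m ≤ k * d := by
    have : m * 2 ≤ m * c := Nat.mul_le_mul_left m hc2
    omega
  have hmle : m ≤ k * (d - 1) := by
    have h1 : d ≤ 2 * (d - 1) := by omega
    have h2 : k * d ≤ k * (2 * (d - 1)) := Nat.mul_le_mul_left k h1
    have h3 : k * (2 * (d - 1)) = 2 * (k * (d - 1)) := by ring
    omega
  have h1 : (a : ZMod N) ^ m = 1 := pow_orderOf_eq_one _
  have hge : 1 ≤ a ^ m := Nat.one_le_pow _ _ (by omega)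
  have h2 : N ∣ a ^ m - 1 := by
    have hcast : ((a ^ m - 1 : ℕ) : ZMod N) = 0 := by
      rw [Nat.cast_sub hge]
      push_cast
      rw [h1]
      ring
    exact (ZMod.natCast_eq_zero_iff _ _).mp hcast
  have ham : 2 ≤ a ^ m := by
    calc 2 ≤ a := ha
    _ = a ^ 1 := (pow_one a).symm
    _ ≤ a ^ m := Nat.pow_le_pow_right (by omega) hm0
  have hle : N ≤ a ^ m - 1 := Nat.le_of_dvd (by omega) h2
  have hfin : a ^ m ≤ a ^ (k * (d - 1)) := Nat.pow_le_pow_right (by omega) hmle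
  omega
end

section
/- For positive integers m, k, d with d ≥ 2: the polynomial M_d(x^m) is divisible by M_d(x^k) in ℤ[x] if and only if k divides m and gcd(m/k, d) = 1, where M_d(y) = ∑_{j=0}^{d-1} y^j. -/
open Polynomial

/-- Product formula: the geometric sum in `X^n` is the product of the cyclotomic
polynomials at divisors of `n*d` that do not divide `n`. -/
lemma geom_sum_eq_prod_cyclotomic (n d : ℕ) (hn : 0 < n) (hd : 0 < d) :
    (∑ j ∈ Finset.range d, ((X : ℤ[X]) ^ n) ^ j) =
      ∏ i ∈ (n * d).divisors \ n.divisors, cyclotomic i ℤ := by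
  have hnd : 0 < n * d := Nat.mul_pos hn hd
  have hXn : ((X : ℤ[X]) ^ n - 1) ≠ 0 := by
    have := X_pow_sub_C_ne_zero (R := ℤ) hn 1
    simpa using this
  apply mul_left_cancel₀ hXn
  have h1 : ((X : ℤ[X]) ^ n - 1) * ∑ j ∈ Finset.range d, ((X : ℤ[X]) ^ n) ^ j =
      X ^ (n * d) - 1 := by
    rw [mul_comm, geom_sum_mul, ← pow_mul]
  rw [h1, ← prod_cyclotomic_eq_X_pow_sub_one hn ℤ, ← prod_cyclotomic_eq_X_pow_sub_one hnd ℤ,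
    ← Finset.prod_sdiff (Nat.divisors_subset_of_dvd hnd.ne' ⟨d, rfl⟩), mul_comm]

lemma subset_of_prod_cyclotomic_dvd {S T : Finset ℕ} (h0S : 0 ∉ S)
    (hdvd : (∏ i ∈ S, cyclotomic i ℤ) ∣ ∏ i ∈ T, cyclotomic i ℤ) : S ⊆ T := by
  intro i hi
  have hipos : 0 < i := Nat.pos_of_ne_zero (fun h => h0S (h ▸ hi))
  have hirr : Irreducible (cyclotomic i ℤ) := cyclotomic.irreducible hipos
  have hprime : Prime (cyclotomic i ℤ) :=
    (UniqueFactorizationMonoid.irreducible_iff_prime).mp hirr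
  have hd2 : cyclotomic i ℤ ∣ ∏ j ∈ T, cyclotomic j ℤ :=
    (Finset.dvd_prod_of_mem (fun j => cyclotomic j ℤ) hi).trans hdvd
  obtain ⟨j, hjT, hj⟩ := hprime.exists_mem_finset_dvd hd2
  have hjpos : 0 < j := by
    rcases Nat.eq_zero_or_pos j with h | h
    · subst h
      simp only [cyclotomic_zero] at hj
      exact absurd (isUnit_of_dvd_one hj) hirr.not_isUnit
    · exact h
  have hjirr : Irreducible (cyclotomic j ℤ) := cyclotomic.irreducible hjpos
  have : cyclotomic i ℤ = cyclotomic j ℤ :=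
    eq_of_monic_of_associated (cyclotomic.monic i ℤ) (cyclotomic.monic j ℤ)
      (hirr.associated_of_dvd hjirr hj)
  rwa [cyclotomic_injective this]

theorem stmt_17 (m k d : ℕ) (hm : 0 < m) (hk : 0 < k) (hd : 2 ≤ d) :
    (∑ j ∈ Finset.range d, ((X : ℤ[X]) ^ k) ^ j) ∣
        (∑ j ∈ Finset.range d, ((X : ℤ[X]) ^ m) ^ j) ↔
      k ∣ m ∧ Nat.gcd (m / k) d = 1 := by
  have hd0 : 0 < d := by omega
  rw [geom_sum_eq_prod_cyclotomic k d hk hd0, geom_sum_eq_prod_cyclotomic m d hm hd0]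
  have mem_iff : ∀ (n i : ℕ), 0 < n → (i ∈ (n * d).divisors \ n.divisors ↔ i ∣ n * d ∧ ¬ i ∣ n) := by
    intro n i hn
    simp [Nat.mem_divisors, Finset.mem_sdiff, hn.ne', hd0.ne', Nat.mul_ne_zero hn.ne' hd0.ne']
  constructor
  · intro hdvd
    have hsub : (k * d).divisors \ k.divisors ⊆ (m * d).divisors \ m.divisors := by
      apply subset_of_prod_cyclotomic_dvd _ hdvd
      intro h0
      exact (Nat.pos_of_mem_divisors ((Finset.mem_sdiff.mp h0).1)).ne' rfl
    -- k ∣ m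
    have hkd_mem : k * d ∈ (k * d).divisors \ k.divisors := by
      rw [mem_iff k (k * d) hk]
      refine ⟨dvd_refl _, fun h => ?_⟩
      have := Nat.le_of_dvd hk h
      nlinarith
    have hkd : k * d ∣ m * d ∧ ¬ k * d ∣ m := (mem_iff m (k * d) hm).mp (hsub hkd_mem)
    have hkm : k ∣ m := (Nat.mul_dvd_mul_iff_right hd0).mp hkd.1
    refine ⟨hkm, ?_⟩
    by_contra hgcd
    obtain ⟨p, hp, hp1⟩ := Nat.exists_prime_and_dvd hgcd
    have hpm : p ∣ m / k := hp1.trans (Nat.gcd_dvd_left _ _)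
    have hpd : p ∣ d := hp1.trans (Nat.gcd_dvd_right _ _)
    have hkp_mem : k * p ∈ (k * d).divisors \ k.divisors := by
      rw [mem_iff k (k * p) hk]
      refine ⟨Nat.mul_dvd_mul_left k hpd, fun h => ?_⟩
      have := Nat.le_of_dvd hk h
      have := hp.two_le
      nlinarith
    have hkp : ¬ k * p ∣ m := ((mem_iff m (k * p) hm).mp (hsub hkp_mem)).2
    exact hkp (by
      have : k * p ∣ k * (m / k) := Nat.mul_dvd_mul_left k hpm
      rwa [Nat.mul_div_cancel' hkm] at this)
  · rintro ⟨hkm, hgcd⟩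
    apply Finset.prod_dvd_prod_of_subset
    intro i hi
    obtain ⟨hi1, hi2⟩ := (mem_iff k i hk).mp hi
    rw [mem_iff m i hm]
    obtain ⟨s, hs⟩ := hkm
    have hs0 : 0 < s := Nat.pos_of_ne_zero (by rintro rfl; omega)
    refine ⟨hi1.trans (by rw [hs]; exact Nat.mul_dvd_mul_right ⟨s, by ring⟩ d), fun h => ?_⟩
    apply hi2
    have hsd : Nat.gcd s d = 1 := by
      rwa [hs, Nat.mul_div_cancel_left s hk] at hgcd
    have : i ∣ Nat.gcd (k * d) (k * s) := Nat.dvd_gcd hi1 (hs ▸ h)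
    rwa [Nat.gcd_mul_left, Nat.gcd_comm d s, hsd, mul_one] at this
end

section
/- Let u, d ≥ 2 be integers with gcd(u, d) > 1. Then the polynomial (y^{ud} - 1)(y - 1) is not divisible by (y^u - 1)(y^d - 1) in ℤ[y]. -/
/-!
With `g = gcd u d > 1`, the cyclotomic polynomial `Φ_g` divides both `y^u - 1` and `y^d - 1`,
so `Φ_g²` would divide `(y^{ud} - 1)(y - 1)`. Over `ℚ`, `Φ_g` is coprime to `Φ_1 = y - 1`,
hence `Φ_g² ∣ y^{ud} - 1`, which is impossible because `y^{ud} - 1` is separable.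
-/

open Polynomial

theorem cyclotomic_dvd_X_pow_sub_one_of_dvd (R : Type*) [CommRing R] {g n : ℕ} (h : g ∣ n) :
    cyclotomic g R ∣ X ^ n - 1 :=
  (cyclotomic.dvd_X_pow_sub_one g R).trans (dvd_pow_sub_one_of_dvd h)

theorem cyclotomic_mul_self_not_dvd_X_pow_sub_one_mul_X_sub_one {g n : ℕ} (hg : 1 < g)
    (hn : n ≠ 0) : ¬ cyclotomic g ℚ * cyclotomic g ℚ ∣ (X ^ n - 1) * (X - 1) := by
  intro h
  have hcop : IsCoprime (cyclotomic g ℚ * cyclotomic g ℚ) (X - 1) := by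
    have := cyclotomic.isCoprime_rat hg.ne'
    rw [cyclotomic_one] at this
    exact this.mul_left this
  have hsqfree : Squarefree (X ^ n - 1 : ℚ[X]) :=
    (X_pow_sub_one_separable_iff.mpr (Nat.cast_ne_zero.mpr hn)).squarefree
  exact (cyclotomic.irreducible_rat (by omega)).not_isUnit
    (hsqfree _ (hcop.dvd_of_dvd_mul_right h))

open Polynomial in
theorem stmt_18 (u d : ℕ) (hu : 2 ≤ u) (hd : 2 ≤ d) (hg : 1 < Nat.gcd u d) :
    ¬ (((X : ℤ[X]) ^ u - 1) * ((X : ℤ[X]) ^ d - 1) ∣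
        ((X : ℤ[X]) ^ (u * d) - 1) * ((X : ℤ[X]) - 1)) := by
  intro h
  have hℚ : ((X : ℚ[X]) ^ u - 1) * (X ^ d - 1) ∣ (X ^ (u * d) - 1) * (X - 1) := by
    simpa using map_dvd (mapRingHom (Int.castRingHom ℚ)) h
  have hΦ := mul_dvd_mul (cyclotomic_dvd_X_pow_sub_one_of_dvd ℚ (Nat.gcd_dvd_left u d))
    (cyclotomic_dvd_X_pow_sub_one_of_dvd ℚ (Nat.gcd_dvd_right u d))
  exact cyclotomic_mul_self_not_dvd_X_pow_sub_one_mul_X_sub_one hg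
    (Nat.mul_ne_zero (by omega) (by omega)) (hΦ.trans hℚ)
end
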